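/- Let α, β, γ be three pairwise distinct elements of a field k. Then in K^M_2(k), {α - β, α - γ} + {β - γ, β - α} + {γ - α, γ - β} = {-1, -1}. -/

import Mathlib

open TensorProduct

/-- The subgroup of Steinberg relations in `kˣ ⊗ℤ kˣ`: generated by `a ⊗ b` with `a + b = 1`. -/
noncomputable def SteinbergSubgroup (k : Type*) [Field k] :
    AddSubgroup (Additive kˣ ⊗[ℤ] Additive kˣ) :=
  AddSubgroup.closure
    {z | ∃ a b : kˣ, (a : k) + (b : k) = 1 ∧
      z = Additive.ofMul a ⊗ₜ[ℤ] Additive.ofMul b}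

/-- The second Milnor K-group of a field `k`. -/
abbrev MilnorK2 (k : Type*) [Field k] :=
  (Additive kˣ ⊗[ℤ] Additive kˣ) ⧸ SteinbergSubgroup k

/-- The Milnor symbol `{a, b}` in `K^M_2(k)`. -/
noncomputable def milnorSymbol {k : Type*} [Field k] (a b : kˣ) : MilnorK2 k :=
  QuotientAddGroup.mk (Additive.ofMul a ⊗ₜ[ℤ] Additive.ofMul b)

/-!
Put `x = α - β`, `y = α - γ`, `z = β - γ`, so that `x + z = y` and the three other differences
are `-x`, `-y`, `-z`. The Steinberg relation `{x / y, z / y} = 0` expands by bilinearity to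
`{x, z} + {y, y} = {x, y} + {y, z}`; together with `{y, -y} = 0` and antisymmetry of symbols
this turns the left-hand side into `{-1, -1}`.
-/

section MilnorSymbol

variable {k : Type*} [Field k]

theorem milnorSymbol_mul_left (a b c : kˣ) :
    milnorSymbol (a * b) c = milnorSymbol a c + milnorSymbol b c := by
  rw [milnorSymbol, milnorSymbol, milnorSymbol, ← QuotientAddGroup.mk_add, ofMul_mul, add_tmul]

theorem milnorSymbol_mul_right (a b c : kˣ) :
    milnorSymbol a (b * c) = milnorSymbol a b + milnorSymbol a c := by
  rw [milnorSymbol, milnorSymbol, milnorSymbol, ← QuotientAddGroup.mk_add, ofMul_mul, tmul_add]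

theorem milnorSymbol_one_left (b : kˣ) : milnorSymbol 1 b = 0 := by
  simpa using milnorSymbol_mul_left (1 : kˣ) 1 b

theorem milnorSymbol_one_right (a : kˣ) : milnorSymbol a 1 = 0 := by
  simpa using milnorSymbol_mul_right a (1 : kˣ) 1

theorem milnorSymbol_inv_left (a b : kˣ) : milnorSymbol a⁻¹ b = -milnorSymbol a b := by
  rw [eq_neg_iff_add_eq_zero, add_comm, ← milnorSymbol_mul_left, mul_inv_cancel,
    milnorSymbol_one_left]

theorem milnorSymbol_inv_right (a b : kˣ) : milnorSymbol a b⁻¹ = -milnorSymbol a b := by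
  rw [eq_neg_iff_add_eq_zero, add_comm, ← milnorSymbol_mul_right, mul_inv_cancel,
    milnorSymbol_one_right]

theorem milnorSymbol_neg_left (a b : kˣ) :
    milnorSymbol (-a) b = milnorSymbol (-1) b + milnorSymbol a b := by
  rw [← milnorSymbol_mul_left, neg_one_mul]

theorem milnorSymbol_neg_right (a b : kˣ) :
    milnorSymbol a (-b) = milnorSymbol a (-1) + milnorSymbol a b := by
  rw [← milnorSymbol_mul_right, neg_one_mul]

theorem milnorSymbol_eq_zero_of_add_eq_one {a b : kˣ} (h : (a : k) + b = 1) :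
    milnorSymbol a b = 0 :=
  (QuotientAddGroup.eq_zero_iff _).mpr (AddSubgroup.subset_closure ⟨a, b, h, rfl⟩)

/-- The Steinberg relation for `a / c + b / c = 1`, expanded by bilinearity. -/
theorem milnorSymbol_add_self_eq_of_add_eq {a b c : kˣ} (h : (a : k) + b = c) :
    milnorSymbol a b + milnorSymbol c c = milnorSymbol a c + milnorSymbol c b := by
  have hst : milnorSymbol (a * c⁻¹) (b * c⁻¹) = 0 :=
    milnorSymbol_eq_zero_of_add_eq_one (by simp [← add_mul, h])
  rw [milnorSymbol_mul_left, milnorSymbol_mul_right, milnorSymbol_mul_right,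
    milnorSymbol_inv_left, milnorSymbol_inv_left, milnorSymbol_inv_right,
    milnorSymbol_inv_right] at hst
  rw [← sub_eq_zero, ← hst]
  abel

theorem milnorSymbol_self_neg (a : kˣ) : milnorSymbol a (-a) = 0 := by
  rcases eq_or_ne a 1 with rfl | ha
  · exact milnorSymbol_one_left _
  have ha' : (a : k) ≠ 1 := Units.val_eq_one.not.mpr ha
  let u : kˣ := Units.mk0 (1 - a) (sub_ne_zero.mpr ha'.symm)
  let v : kˣ := Units.mk0 (1 - (a : k)⁻¹) (sub_ne_zero.mpr (inv_ne_one.mpr ha').symm)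
  -- `1 - a⁻¹ = -(1 - a) / a`
  have hneg : -a = u * v⁻¹ := by
    ext
    have : (a : k) - 1 ≠ 0 := sub_ne_zero.mpr ha'
    simp only [Units.val_neg, Units.val_mul, Units.val_inv_eq_inv_val, Units.val_mk0, u, v]
    field_simp
    ring
  have hu : milnorSymbol a u = 0 := milnorSymbol_eq_zero_of_add_eq_one (by simp [u])
  have hv : milnorSymbol a⁻¹ v = 0 := milnorSymbol_eq_zero_of_add_eq_one (by simp [v])
  rw [milnorSymbol_inv_left, neg_eq_zero] at hv
  rw [hneg, milnorSymbol_mul_right, milnorSymbol_inv_right, hu, hv, neg_zero, add_zero]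

theorem milnorSymbol_swap (a b : kˣ) : milnorSymbol b a = -milnorSymbol a b := by
  have ha : milnorSymbol a (-(a * b)) = milnorSymbol a b := by
    rw [← neg_mul, milnorSymbol_mul_right, milnorSymbol_self_neg, zero_add]
  have hb : milnorSymbol b (-(a * b)) = milnorSymbol b a := by
    rw [← mul_neg, mul_comm a, milnorSymbol_mul_right, milnorSymbol_self_neg, zero_add]
  rw [eq_neg_iff_add_eq_zero, add_comm, ← ha, ← hb, ← milnorSymbol_mul_left,
    milnorSymbol_self_neg]

theorem milnorSymbol_cyclic_of_add_eq {x y z : kˣ} (h : (x : k) + z = y) :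
    milnorSymbol x y + milnorSymbol z (-x) + milnorSymbol (-y) (-z) =
      milnorSymbol (-1) (-1) := by
  have hst := milnorSymbol_add_self_eq_of_add_eq h
  have hy := milnorSymbol_self_neg y
  rw [milnorSymbol_neg_right] at hy
  rw [milnorSymbol_neg_right z x, milnorSymbol_neg_left y (-z), milnorSymbol_neg_right (-1) z,
    milnorSymbol_neg_right y z, milnorSymbol_swap x z, milnorSymbol_swap z (-1)]
  linear_combination (norm := abel) hy - hst

end MilnorSymbol

theorem milnorSymbol_cyclic_relation (k : Type*) [Field k] (α β γ : k)
    (hab : α ≠ β) (hac : α ≠ γ) (hbc : β ≠ γ) :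
    milnorSymbol (Units.mk0 (α - β) (sub_ne_zero_of_ne hab))
        (Units.mk0 (α - γ) (sub_ne_zero_of_ne hac))
      + milnorSymbol (Units.mk0 (β - γ) (sub_ne_zero_of_ne hbc))
          (Units.mk0 (β - α) (sub_ne_zero_of_ne hab.symm))
      + milnorSymbol (Units.mk0 (γ - α) (sub_ne_zero_of_ne hac.symm))
          (Units.mk0 (γ - β) (sub_ne_zero_of_ne hbc.symm))
      = milnorSymbol (-1 : kˣ) (-1 : kˣ) := by
  have hswap {p q : k} (h : p ≠ q) :
      Units.mk0 (q - p) (sub_ne_zero_of_ne h.symm) = -Units.mk0 (p - q) (sub_ne_zero_of_ne h) :=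
    Units.ext (neg_sub p q).symm
  rw [hswap hab, hswap hac, hswap hbc]
  exact milnorSymbol_cyclic_of_add_eq (by simp)
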